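/- arXiv:2003.07230 — 2 statements merged into one kernel-verified Lean document; each statement's English description precedes it below -/
import Mathlib

section
/- Let R be a commutative ring, A and B ideals, n ≥ 3. Suppose i ≠ j and a ∈ A, b ∈ B. Then for any k ∉ {i,j} and any c ∈ R, the matrix Eᵢₖ(c) commutes with [Eᵢⱼ(a), Eⱼᵢ(b)] modulo E(n,R,AB); i.e., the commutator [Eᵢₖ(c), [Eᵢⱼ(a), Eⱼᵢ(b)]] lies in E(n,R,AB). -/
open scoped commutatorElement

def elemSL (n : ℕ) (R : Type*) [CommRing R] (i j : Fin n) (hij : i ≠ j) (t : R) :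
    Matrix.SpecialLinearGroup (Fin n) R :=
  ⟨Matrix.transvection i j t, Matrix.det_transvection_of_ne i j hij t⟩

/-- The (absolute) elementary subgroup `E(n,R)`. -/
def elemGroup (n : ℕ) (R : Type*) [CommRing R] :
    Subgroup (Matrix.SpecialLinearGroup (Fin n) R) :=
  Subgroup.closure {x | ∃ (i j : Fin n) (h : i ≠ j) (t : R), x = elemSL n R i j h t}

/-- The unrelativised elementary subgroup `E(n,I)` of level `I`. -/
def elemGroupLevel (n : ℕ) (R : Type*) [CommRing R] (I : Ideal R) :
    Subgroup (Matrix.SpecialLinearGroup (Fin n) R) :=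
  Subgroup.closure {x | ∃ (i j : Fin n) (h : i ≠ j), ∃ c ∈ I, x = elemSL n R i j h c}

/-- The relative elementary subgroup `E(n,R,I)`: the normal closure of `E(n,I)`
in `E(n,R)`, generated by `E(n,R)`-conjugates of elementary matrices of level `I`. -/
def relElemGroup (n : ℕ) (R : Type*) [CommRing R] (I : Ideal R) :
    Subgroup (Matrix.SpecialLinearGroup (Fin n) R) :=
  Subgroup.closure {x | ∃ g ∈ elemGroup n R, ∃ (i j : Fin n) (h : i ≠ j),
    ∃ c ∈ I, x = g * elemSL n R i j h c * g⁻¹}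

/-!
Write `x = ⁅E_ij(a), E_ji(b)⁆`. It only touches rows and columns `i, j`, so `x E_ik(-c) x⁻¹`
is `1 - c (x eᵢ) eₖᵀ`, and the `i`-th column of `x` is `(1 + ab + (ab)²) eᵢ + ab² eⱼ`.
Hence `⁅E_ik(c), x⁆ = E_ik(-(cab + c(ab)²)) E_jk(-cab²)`, a product of two elementary matrices
whose parameters are multiples of `ab ∈ AB`.
-/

open Matrix

section

variable {n : ℕ} {R : Type*} [CommRing R]

lemma elemSL_mul_elemSL {p q : Fin n} (h : p ≠ q) (s t : R) :
    elemSL n R p q h s * elemSL n R p q h t = elemSL n R p q h (s + t) :=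
  Subtype.ext (transvection_mul_transvection_same p q h s t)

lemma elemSL_inv {p q : Fin n} (h : p ≠ q) (t : R) :
    (elemSL n R p q h t)⁻¹ = elemSL n R p q h (-t) :=
  inv_eq_of_mul_eq_one_right <| by
    rw [elemSL_mul_elemSL, add_neg_cancel]
    exact Subtype.ext (transvection_zero p q)

lemma elemSL_mem_relElemGroup {I : Ideal R} {p q : Fin n} (h : p ≠ q) {t : R} (ht : t ∈ I) :
    elemSL n R p q h t ∈ relElemGroup n R I :=
  Subgroup.subset_closure ⟨1, one_mem _, p, q, h, t, ht, by rw [one_mul, inv_one, mul_one]⟩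

lemma transvection_eq_one_add_smul_single (p q : Fin n) (t : R) :
    transvection p q t = 1 + t • single p q (1 : R) := by
  rw [transvection, smul_single, smul_eq_mul, mul_one]

lemma commutator_elemSL_commutator_elemSL {i j k : Fin n} (hij : i ≠ j) (hik : i ≠ k)
    (hjk : j ≠ k) (a b c : R) :
    ⁅elemSL n R i k hik c, ⁅elemSL n R i j hij a, elemSL n R j i hij.symm b⁆⁆ =
      elemSL n R i k hik (-(c * (a * b) + c * (a * b) ^ 2)) *
        elemSL n R j k hjk (-(c * (a * b) * b)) := by
  simp only [commutatorElement_def, _root_.mul_inv_rev, elemSL_inv]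
  apply Subtype.ext
  simp only [Matrix.SpecialLinearGroup.coe_mul]
  simp only [elemSL, transvection_eq_one_add_smul_single, mul_add, add_mul, one_mul, mul_one,
    smul_mul_assoc, mul_smul_comm, single_mul_single_same,
    single_mul_single_of_ne _ _ _ _ hij, single_mul_single_of_ne _ _ _ _ hij.symm,
    single_mul_single_of_ne _ _ _ _ hik.symm, single_mul_single_of_ne _ _ _ _ hjk.symm,
    smul_zero, add_zero]
  module

end

theorem elem_commutes_with_elem_commutator_general (n : ℕ) (R : Type*) [CommRing R]
    (A B : Ideal R) (i j k : Fin n) (hij : i ≠ j) (hki : k ≠ i) (hkj : k ≠ j)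
    (a b : R) (ha : a ∈ A) (hb : b ∈ B) (c : R) :
    ⁅elemSL n R i k hki.symm c,
      ⁅elemSL n R i j hij a, elemSL n R j i hij.symm b⁆⁆ ∈
    relElemGroup n R (A * B) := by
  have hab : a * b ∈ A * B := Ideal.mul_mem_mul ha hb
  rw [commutator_elemSL_commutator_elemSL hij hki.symm hkj.symm]
  refine mul_mem (elemSL_mem_relElemGroup _ ?_) (elemSL_mem_relElemGroup _ ?_)
  · exact neg_mem <| add_mem (Ideal.mul_mem_left _ c hab)
      (Ideal.mul_mem_left _ c (Ideal.pow_mem_of_mem _ hab 2 two_pos))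
  · exact neg_mem <| Ideal.mul_mem_right _ _ (Ideal.mul_mem_left _ c hab)

theorem elem_commutes_with_elem_commutator (n : ℕ) (hn : 3 ≤ n) (R : Type*) [CommRing R]
    (A B : Ideal R) (i j k : Fin n) (hij : i ≠ j) (hki : k ≠ i) (hkj : k ≠ j)
    (a b : R) (ha : a ∈ A) (hb : b ∈ B) (c : R) :
    ⁅elemSL n R i k hki.symm c,
      ⁅elemSL n R i j hij a, elemSL n R j i hij.symm b⁆⁆ ∈
    relElemGroup n R (A * B) :=
  elem_commutes_with_elem_commutator_general n R A B i j k hij hki hkj a b ha hb c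
end

section
/- Let R be a commutative ring with ideals A, B, and n ≥ 3. For a ∈ A, b ∈ B, c ∈ R and indices i ≠ j, the elementary commutator satisfies the symbol-type relation [Eᵢⱼ(ac), Eⱼᵢ(b)] ≡ [Eᵢⱼ(a), Eⱼᵢ(cb)] modulo E(n,R,AB). -/
open scoped commutatorElement

/-! Work in the quotient `E(n,R) ⧸ E(n,R,AB)` and choose a third index `k`. There
`x_ij(ac) = ⁅x_ik(a), x_kj(c)⁆` and `⁅x_kj(c), x_ji(b)⁆ = x_ki(cb)`, while `x_ji(b)` commutes with
`x_ik(a)` and `x_ki(cb)` with `x_ij(ac)`, because their commutators are elementary of level `AB`.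
A general commutator identity then turns `⁅x_ij(ac), x_ji(b)⁆` into `⁅x_ki(cb)⁻¹, x_ik(a)⁆`, which
depends on `b` and `c` only through `cb`; comparing the instances `(a, b, c)` and `(a, cb, 1)`
gives the relation. -/

theorem commutatorElement_commutatorElement_eq_of_commute {G : Type*} [Group G] {p q w : G}
    (hwp : Commute w p) (hc : Commute ⁅q, w⁆ ⁅p, q⁆) :
    ⁅⁅p, q⁆, w⁆ = ⁅⁅q, w⁆⁻¹, p⁆ := by
  set m := ⁅p, q⁆
  set s := ⁅q, w⁆
  have hconj : w * m * w⁻¹ = p * s⁻¹ * p⁻¹ * m * s := by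
    calc w * m * w⁻¹ = (w * p * w⁻¹) * (s⁻¹ * q) * (w * p * w⁻¹)⁻¹ * (s⁻¹ * q)⁻¹ := by
          simp only [m, s, commutatorElement_def]; group
      _ = p * s⁻¹ * p⁻¹ * m * s := by
          rw [hwp.eq, mul_inv_cancel_right]; simp only [m, commutatorElement_def]; group
  calc ⁅m, w⁆ = (w * m * w⁻¹ * m⁻¹)⁻¹ := by rw [commutatorElement_def]; group
    _ = (p * s⁻¹ * p⁻¹ * (s * m * m⁻¹))⁻¹ := by rw [hconj, hc.eq]; group
    _ = ⁅s⁻¹, p⁆ := by rw [commutatorElement_def]; group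

theorem Fin.exists_ne_ne_of_three_le {n : ℕ} (hn : 3 ≤ n) (i j : Fin n) :
    ∃ k, i ≠ k ∧ j ≠ k := by
  have hcard : ({i, j} : Finset (Fin n)).card < (Finset.univ : Finset (Fin n)).card := by
    rw [Finset.card_univ, Fintype.card_fin]
    exact (Finset.card_le_two).trans_lt hn
  obtain ⟨k, -, hk⟩ := Finset.exists_mem_notMem_of_card_lt_card hcard
  simp only [Finset.mem_insert, Finset.mem_singleton, not_or] at hk
  exact ⟨k, Ne.symm hk.1, Ne.symm hk.2⟩

section

variable {n : ℕ} {R : Type*} [CommRing R]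

theorem elemSL_commutatorElement {i j k : Fin n} (hik : i ≠ k) (hkj : k ≠ j) (hij : i ≠ j)
    (u v : R) :
    ⁅elemSL n R i k hik u, elemSL n R k j hkj v⁆ = elemSL n R i j hij (u * v) := by
  rw [commutatorElement_def, mul_inv_eq_iff_eq_mul, mul_inv_eq_iff_eq_mul]
  apply Subtype.ext
  change Matrix.transvection i k u * Matrix.transvection k j v
    = Matrix.transvection i j (u * v) * Matrix.transvection k j v * Matrix.transvection i k u
  simp only [Matrix.transvection, Matrix.add_mul, Matrix.mul_add, Matrix.one_mul, Matrix.mul_one,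
    Matrix.single_mul_single_same, Matrix.single_mul_single_of_ne, hkj.symm, hij.symm, ne_eq,
    not_false_eq_true, add_zero]
  abel

theorem conj_mem_relElemGroup {I : Ideal R} {g x : Matrix.SpecialLinearGroup (Fin n) R}
    (hg : g ∈ elemGroup n R) (hx : x ∈ relElemGroup n R I) :
    g * x * g⁻¹ ∈ relElemGroup n R I := by
  induction hx using Subgroup.closure_induction with
  | mem x hx =>
    obtain ⟨h, hh, i, j, hij, c, hc, rfl⟩ := hx
    exact Subgroup.subset_closure ⟨g * h, mul_mem hg hh, i, j, hij, c, hc, by group⟩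
  | one => simp
  | mul x y _ _ hx hy => simpa only [mul_assoc, inv_mul_cancel_left] using mul_mem hx hy
  | inv x _ hx => simpa only [mul_inv_rev, inv_inv, mul_assoc] using inv_mem hx

instance (I : Ideal R) : ((relElemGroup n R I).subgroupOf (elemGroup n R)).Normal :=
  ⟨fun x hx g => by simpa [Subgroup.mem_subgroupOf] using conj_mem_relElemGroup g.2 hx⟩

abbrev RelElemQuotient (n : ℕ) (R : Type*) [CommRing R] (I : Ideal R) :=
  elemGroup n R ⧸ (relElemGroup n R I).subgroupOf (elemGroup n R)

def elemGroupGen (i j : Fin n) (h : i ≠ j) (t : R) : elemGroup n R :=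
  ⟨elemSL n R i j h t, Subgroup.subset_closure ⟨i, j, h, t, rfl⟩⟩

def elemQuot (I : Ideal R) (i j : Fin n) (h : i ≠ j) (t : R) : RelElemQuotient n R I :=
  QuotientGroup.mk' _ (elemGroupGen i j h t)

theorem elemQuot_eq_one {I : Ideal R} {i j : Fin n} (h : i ≠ j) {t : R} (ht : t ∈ I) :
    elemQuot I i j h t = 1 := by
  rw [elemQuot, QuotientGroup.mk'_apply, QuotientGroup.eq_one_iff, Subgroup.mem_subgroupOf]
  exact Subgroup.subset_closure ⟨1, one_mem _, i, j, h, t, ht, by simp [elemGroupGen]⟩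

theorem elemQuot_commutatorElement {I : Ideal R} {i j k : Fin n} (hik : i ≠ k) (hkj : k ≠ j)
    (hij : i ≠ j) (u v : R) :
    ⁅elemQuot I i k hik u, elemQuot I k j hkj v⁆ = elemQuot I i j hij (u * v) := by
  simp only [elemQuot, ← map_commutatorElement]
  congr 1
  exact Subtype.ext (elemSL_commutatorElement hik hkj hij u v)

theorem commutatorElement_elemQuot_eq_of_third_index {A B : Ideal R} {i j k : Fin n}
    (hij : i ≠ j) (hik : i ≠ k) (hjk : j ≠ k) {α β : R} (γ : R) (hα : α ∈ A) (hβ : β ∈ B) :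
    ⁅elemQuot (A * B) i j hij (α * γ), elemQuot (A * B) j i hij.symm β⁆
      = ⁅(elemQuot (A * B) k i hik.symm (γ * β))⁻¹, elemQuot (A * B) i k hik α⁆ := by
  have hαβ : α * β ∈ A * B := Ideal.mul_mem_mul hα hβ
  have hm := elemQuot_commutatorElement (I := A * B) hik hjk.symm hij α γ
  have hs := elemQuot_commutatorElement (I := A * B) hjk.symm hij.symm hik.symm γ β
  have hwp : Commute (elemQuot (A * B) j i hij.symm β) (elemQuot (A * B) i k hik α) := by
    rw [← commutatorElement_eq_one_iff_commute, elemQuot_commutatorElement hij.symm hik hjk]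
    exact elemQuot_eq_one _ (mul_comm α β ▸ hαβ)
  have hsm : Commute (elemQuot (A * B) k i hik.symm (γ * β))
      (elemQuot (A * B) i j hij (α * γ)) := by
    rw [← commutatorElement_eq_one_iff_commute, elemQuot_commutatorElement hik.symm hij hjk.symm]
    refine elemQuot_eq_one _ ?_
    rw [show γ * β * (α * γ) = γ * γ * (α * β) by ring]
    exact Ideal.mul_mem_left _ _ hαβ
  rw [← hm, ← hs] at hsm ⊢
  exact commutatorElement_commutatorElement_eq_of_commute hwp hsm

theorem commutatorElement_mul_inv_mem_relElemGroup_of_elemQuot {I : Ideal R} {i j k l : Fin n}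
    (hij : i ≠ j) (hkl : k ≠ l) {u v u' v' : R}
    (h : ⁅elemQuot I i j hij u, elemQuot I k l hkl v⁆
      = ⁅elemQuot I i j hij u', elemQuot I k l hkl v'⁆) :
    ⁅elemSL n R i j hij u, elemSL n R k l hkl v⁆ *
      ⁅elemSL n R i j hij u', elemSL n R k l hkl v'⁆⁻¹ ∈ relElemGroup n R I := by
  simp only [elemQuot, ← map_commutatorElement] at h
  rw [QuotientGroup.mk'_apply, QuotientGroup.mk'_apply, QuotientGroup.eq_iff_div_mem,
    Subgroup.mem_subgroupOf, Subgroup.coe_div, div_eq_mul_inv] at h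
  exact h

end

theorem elem_commutator_symbol_relation (n : ℕ) (hn : 3 ≤ n) (R : Type*) [CommRing R]
    (A B : Ideal R) (i j : Fin n) (hij : i ≠ j)
    (a b c : R) (ha : a ∈ A) (hb : b ∈ B) :
    ⁅elemSL n R i j hij (a * c), elemSL n R j i hij.symm b⁆ *
      ⁅elemSL n R i j hij a, elemSL n R j i hij.symm (c * b)⁆⁻¹ ∈
    relElemGroup n R (A * B) := by
  obtain ⟨k, hik, hjk⟩ := Fin.exists_ne_ne_of_three_le hn i j
  apply commutatorElement_mul_inv_mem_relElemGroup_of_elemQuot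
  have h₂ := commutatorElement_elemQuot_eq_of_third_index hij hik hjk 1 ha (B.mul_mem_left c hb)
  rw [mul_one, one_mul] at h₂
  exact (commutatorElement_elemQuot_eq_of_third_index hij hik hjk c ha hb).trans h₂.symm
end
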